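/- arXiv:1405.6514 — 4 statements merged into one kernel-verified Lean document; each statement's English description precedes it below -/
import Mathlib

section
/- Let u : [0,∞) → ℝ be bounded and measurable, M ∈ ℝ, and suppose there exist constants K, C > 0 such that |(1/t) ∫₀ᵗ u(s) ds − M| ≤ K e^{−Ct} for all t ≥ 1. Then there exists a constant K' > 0 such that |δ ∫₀^∞ u(t) e^{−δt} dt − M| ≤ K' δ for all δ ∈ (0,1]. -/
/-!
With `W s = ∫₀ˢ (u - M)`, Fubini gives
`δ ∫₀^∞ u e^{-δt} dt - M = δ² ∫₀^∞ e^{-δs} W s ds`.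
Boundedness of `u` gives `|W s| ≤ B + |M|` on `(0, 1]`, and the Cesàro rate gives
`|W s| ≤ K s e^{-Cs}` for `s ≥ 1`, so `|W|` has an integrable majorant independent of `δ`;
hence the right-hand side is `O(δ²)`, which is `O(δ)` for `δ ≤ 1`.
-/

open MeasureTheory Set intervalIntegral Real

section

variable {u : ℝ → ℝ} {B δ : ℝ}

theorem integral_Ioi_exp_neg_mul (hδ : 0 < δ) (t : ℝ) :
    ∫ s in Ioi t, exp (-δ * s) = exp (-δ * t) / δ := by
  rw [integral_exp_mul_Ioi (neg_neg_iff_pos.mpr hδ), neg_div_neg_eq]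

theorem integrableOn_Ioi_mul_exp_neg_mul_of_abs_le (hu : Measurable u)
    (huB : ∀ t ∈ Ioi (0:ℝ), |u t| ≤ B) (hδ : 0 < δ) :
    IntegrableOn (fun t => u t * exp (-δ * t)) (Ioi 0) :=
  (exp_neg_integrableOn_Ioi 0 hδ).bdd_mul hu.aestronglyMeasurable
    ((ae_restrict_mem measurableSet_Ioi).mono fun t ht => huB t ht)

theorem intervalIntegrable_of_abs_le (hu : Measurable u) (huB : ∀ t ∈ Ioi (0:ℝ), |u t| ≤ B)
    {s : ℝ} (hs : 0 ≤ s) : IntervalIntegrable u volume 0 s :=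
  (intervalIntegrable_iff_integrableOn_Ioc_of_le hs).mpr <|
    Measure.integrableOn_of_bounded measure_Ioc_lt_top.ne hu.aestronglyMeasurable
      ((ae_restrict_mem measurableSet_Ioc).mono fun t ht => huB t ht.1)

theorem integrable_ite_lt_mul_exp_neg_mul (hu : Measurable u)
    (huB : ∀ t ∈ Ioi (0:ℝ), |u t| ≤ B) (hδ : 0 < δ) :
    Integrable (fun p : ℝ × ℝ => if p.1 < p.2 then u p.1 * exp (-δ * p.2) else 0)
      ((volume.restrict (Ioi 0)).prod (volume.restrict (Ioi 0))) := by
  have hB : 0 ≤ B := (abs_nonneg _).trans (huB 1 (mem_Ioi.mpr one_pos))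
  have h_meas : Measurable fun p : ℝ × ℝ => if p.1 < p.2 then u p.1 * exp (-δ * p.2) else 0 :=
    Measurable.ite (measurableSet_lt measurable_fst measurable_snd)
      ((hu.comp measurable_fst).mul (measurable_snd.const_mul _).exp) measurable_const
  have hexp := exp_neg_integrableOn_Ioi 0 (half_pos hδ)
  refine Integrable.mono' ((hexp.const_mul B).mul_prod hexp) h_meas.aestronglyMeasurable ?_
  rw [Measure.prod_restrict]
  filter_upwards [ae_restrict_mem (measurableSet_Ioi.prod measurableSet_Ioi)]
    with ⟨t, s⟩ ⟨ht, _⟩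
  split_ifs with hts
  · rw [norm_mul, Real.norm_eq_abs, Real.norm_eq_abs, abs_exp, mul_assoc, ← exp_add]
    -- on `t < s` we have `δ s ≥ δ t / 2 + δ s / 2`
    gcongr
    · exact huB t ht
    · nlinarith
  · simp only [norm_zero]; positivity

theorem integral_Ioi_mul_exp_neg_mul_eq (hu : Measurable u)
    (huB : ∀ t ∈ Ioi (0:ℝ), |u t| ≤ B) (hδ : 0 < δ) :
    ∫ t in Ioi 0, u t * exp (-δ * t) =
      δ * ∫ s in Ioi 0, exp (-δ * s) * ∫ x in 0..s, u x := by
  -- write `e^{-δt} = δ ∫ₜ^∞ e^{-δs} ds` and swap the integrals over the triangle `0 < t < s`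
  set f : ℝ → ℝ → ℝ := fun t s => if t < s then u t * exp (-δ * s) else 0
  have h_inner_s : ∀ t ∈ Ioi (0:ℝ), ∫ s in Ioi 0, f t s = u t * exp (-δ * t) / δ := by
    intro t ht
    have hf : f t = (Ioi t).indicator fun s => u t * exp (-δ * s) := by
      ext s; simp only [f, indicator_apply, mem_Ioi]
    rw [hf, MeasureTheory.integral_indicator measurableSet_Ioi,
      Measure.restrict_restrict measurableSet_Ioi,
      inter_eq_left.mpr (Ioi_subset_Ioi (le_of_lt ht)), MeasureTheory.integral_const_mul,
      integral_Ioi_exp_neg_mul hδ, mul_div_assoc]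
  have h_inner_t :
      ∀ s ∈ Ioi (0:ℝ), ∫ t in Ioi 0, f t s = exp (-δ * s) * ∫ x in 0..s, u x := by
    intro s hs
    have hf : (fun t => f t s) = (Iio s).indicator fun t => u t * exp (-δ * s) := by
      ext t; simp only [f, indicator_apply, mem_Iio]
    rw [hf, MeasureTheory.integral_indicator measurableSet_Iio,
      Measure.restrict_restrict measurableSet_Iio, inter_comm, Ioi_inter_Iio,
      MeasureTheory.integral_mul_const, integral_of_le (le_of_lt hs),
      integral_Ioc_eq_integral_Ioo, mul_comm]
  have hswap := integral_integral_swap (f := f) (integrable_ite_lt_mul_exp_neg_mul hu huB hδ)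
  rw [setIntegral_congr_fun measurableSet_Ioi h_inner_s,
    setIntegral_congr_fun measurableSet_Ioi h_inner_t, MeasureTheory.integral_div] at hswap
  rw [← hswap, mul_div_cancel₀ _ hδ.ne']

theorem integral_sub_const_eq_mul_average_sub {t : ℝ} (M : ℝ)
    (hu : IntervalIntegrable u volume 0 t) (ht : t ≠ 0) :
    ∫ x in 0..t, (u x - M) = t * ((1 / t) * (∫ x in 0..t, u x) - M) := by
  rw [intervalIntegral.integral_sub hu intervalIntegrable_const, intervalIntegral.integral_const,
    smul_eq_mul]
  field_simp
  ring

theorem mul_integral_Ioi_mul_exp_neg_mul_sub_eq (M : ℝ) (hu : Measurable u)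
    (huB : ∀ t ∈ Ioi (0:ℝ), |u t| ≤ B) (hδ : 0 < δ) :
    δ * (∫ t in Ioi 0, u t * exp (-δ * t)) - M =
      δ ^ 2 * ∫ s in Ioi 0, exp (-δ * s) * ∫ x in 0..s, (u x - M) := by
  have hsub : ∫ t in Ioi 0, (u t - M) * exp (-δ * t) =
      (∫ t in Ioi 0, u t * exp (-δ * t)) - M / δ := by
    simp_rw [sub_mul]
    rw [integral_sub (integrableOn_Ioi_mul_exp_neg_mul_of_abs_le hu huB hδ)
      ((exp_neg_integrableOn_Ioi 0 hδ).const_mul M), MeasureTheory.integral_const_mul,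
      integral_Ioi_exp_neg_mul hδ, mul_zero, exp_zero, mul_one_div]
  have hsub_bdd : ∀ t ∈ Ioi (0:ℝ), |u t - M| ≤ B + |M| := fun t ht =>
    (abs_sub _ _).trans (add_le_add_left (huB t ht) _)
  rw [sq, mul_assoc, ← integral_Ioi_mul_exp_neg_mul_eq (hu.sub_const M) hsub_bdd hδ, hsub,
    mul_sub, mul_div_cancel₀ _ hδ.ne']

theorem abs_integral_Ioi_exp_neg_mul_mul_le {W g : ℝ → ℝ} (hg : IntegrableOn g (Ioi 0))
    (hWg : ∀ s ∈ Ioi (0:ℝ), |W s| ≤ g s) (hδ : 0 ≤ δ) :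
    |∫ s in Ioi 0, exp (-δ * s) * W s| ≤ ∫ s in Ioi 0, g s := by
  rw [← Real.norm_eq_abs]
  refine norm_integral_le_of_norm_le hg ((ae_restrict_mem measurableSet_Ioi).mono fun s hs => ?_)
  rw [norm_mul, Real.norm_eq_abs, Real.norm_eq_abs, abs_exp]
  have hexp : exp (-δ * s) ≤ 1 := exp_le_one_iff.mpr (by nlinarith [mem_Ioi.mp hs])
  simpa using mul_le_mul hexp (hWg s hs) (abs_nonneg _) zero_le_one

theorem abs_mul_integral_Ioi_mul_exp_neg_mul_sub_le {g : ℝ → ℝ} (M : ℝ) (hu : Measurable u)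
    (huB : ∀ t ∈ Ioi (0:ℝ), |u t| ≤ B) (hg : IntegrableOn g (Ioi 0))
    (hWg : ∀ s ∈ Ioi (0:ℝ), |∫ x in 0..s, (u x - M)| ≤ g s) (hδ : 0 < δ) :
    |δ * (∫ t in Ioi 0, u t * exp (-δ * t)) - M| ≤ δ ^ 2 * ∫ s in Ioi 0, g s := by
  rw [mul_integral_Ioi_mul_exp_neg_mul_sub_eq M hu huB hδ, abs_mul, abs_of_pos (by positivity)]
  gcongr
  exact abs_integral_Ioi_exp_neg_mul_mul_le hg hWg hδ.le

theorem integrableOn_Ioi_mul_exp_neg_mul {C : ℝ} (hC : 0 < C) :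
    IntegrableOn (fun s => s * exp (-C * s)) (Ioi 0) := by
  simpa only [rpow_one] using
    integrableOn_rpow_mul_exp_neg_mul_rpow (s := 1) (p := 1) (by norm_num) one_pos hC

theorem abs_integral_sub_const_le_of_abs_le (M : ℝ) (huB : ∀ t ∈ Ioi (0:ℝ), |u t| ≤ B)
    {s : ℝ} (hs : 0 ≤ s) : |∫ x in 0..s, (u x - M)| ≤ (B + |M|) * s := by
  have h := intervalIntegral.norm_integral_le_of_norm_le_const (f := fun x => u x - M)
    (a := 0) (b := s) (C := B + |M|) fun x hx => by
      rw [uIoc_of_le hs] at hx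
      exact (abs_sub _ _).trans (add_le_add_left (huB x hx.1) _)
  rwa [sub_zero, abs_of_nonneg hs] at h

theorem exists_integrableOn_Ioi_abs_integral_sub_const_le {K C : ℝ} (M : ℝ) (hC : 0 < C)
    (hu : Measurable u) (huB : ∀ t ∈ Ioi (0:ℝ), |u t| ≤ B)
    (hces : ∀ t ≥ (1:ℝ), |(1 / t) * (∫ s in (0:ℝ)..t, u s) - M| ≤ K * exp (-C * t)) :
    ∃ g : ℝ → ℝ, IntegrableOn g (Ioi 0) ∧
      ∀ s ∈ Ioi (0:ℝ), |∫ x in 0..s, (u x - M)| ≤ g s := by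
  refine ⟨(Ioc 0 1).indicator (fun _ => B + |M|) +
    (Ioi 1).indicator (fun s => K * (s * exp (-C * s))), ?_, fun s hs => ?_⟩
  · refine Integrable.add ?_ ?_
    · exact ((integrable_indicator_iff measurableSet_Ioc).mpr
        (integrableOn_const measure_Ioc_lt_top.ne)).integrableOn
    · exact ((integrable_indicator_iff measurableSet_Ioi).mpr
        (((integrableOn_Ioi_mul_exp_neg_mul hC).mono_set
          (Ioi_subset_Ioi zero_le_one)).const_mul K)).integrableOn
  rcases le_or_gt s 1 with hs1 | hs1
  · have hB : 0 ≤ B + |M| :=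
      add_nonneg ((abs_nonneg _).trans (huB 1 (mem_Ioi.mpr one_pos))) (abs_nonneg _)
    simp only [Pi.add_apply, indicator_of_mem (show s ∈ Ioc 0 1 from ⟨hs, hs1⟩),
      indicator_of_notMem (show s ∉ Ioi 1 from hs1.not_gt), add_zero]
    exact (abs_integral_sub_const_le_of_abs_le M huB (le_of_lt hs)).trans
      (mul_le_of_le_one_right hB hs1)
  · simp only [Pi.add_apply, indicator_of_notMem (show s ∉ Ioc 0 1 from fun h => h.2.not_gt hs1),
      indicator_of_mem (show s ∈ Ioi 1 from hs1), zero_add]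
    rw [integral_sub_const_eq_mul_average_sub M
      (intervalIntegrable_of_abs_le hu huB (le_of_lt hs)) (ne_of_gt hs), abs_mul,
      abs_of_pos (a := s) hs]
    nlinarith [hces s hs1.le]

end

theorem stmt_4_general (u : ℝ → ℝ) (M K C : ℝ) (hC : 0 < C)
    (hmeas : Measurable u) (hbd : ∃ B, ∀ t ≥ (0:ℝ), |u t| ≤ B)
    (hces : ∀ t ≥ (1:ℝ),
      |(1 / t) * (∫ s in (0:ℝ)..t, u s) - M| ≤ K * Real.exp (-C * t)) :
    ∃ K' > 0, ∀ δ ∈ Ioc (0:ℝ) 1,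
      |δ * (∫ t in Ioi (0:ℝ), u t * Real.exp (-δ * t)) - M| ≤ K' * δ := by
  obtain ⟨B, hB⟩ := hbd
  have huB : ∀ t ∈ Ioi (0:ℝ), |u t| ≤ B := fun t ht => hB t (le_of_lt ht)
  obtain ⟨g, hg, hWg⟩ := exists_integrableOn_Ioi_abs_integral_sub_const_le M hC hmeas huB hces
  set K' := max (∫ s in Ioi 0, g s) 1
  refine ⟨K', by positivity, fun δ ⟨hδ0, hδ1⟩ => ?_⟩
  calc |δ * (∫ t in Ioi 0, u t * exp (-δ * t)) - M| ≤ δ ^ 2 * ∫ s in Ioi 0, g s :=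
        abs_mul_integral_Ioi_mul_exp_neg_mul_sub_le M hmeas huB hg hWg hδ0
    _ ≤ δ ^ 2 * K' := by gcongr; exact le_max_left _ _
    _ ≤ δ * K' := by gcongr; nlinarith
    _ = K' * δ := mul_comm _ _

theorem stmt_4 (u : ℝ → ℝ) (M K C : ℝ) (hK : 0 < K) (hC : 0 < C)
    (hmeas : Measurable u) (hbd : ∃ B, ∀ t ≥ (0:ℝ), |u t| ≤ B)
    (hces : ∀ t ≥ (1:ℝ),
      |(1 / t) * (∫ s in (0:ℝ)..t, u s) - M| ≤ K * Real.exp (-C * t)) :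
    ∃ K' > 0, ∀ δ ∈ Ioc (0:ℝ) 1,
      |δ * (∫ t in Ioi (0:ℝ), u t * Real.exp (-δ * t)) - M| ≤ K' * δ :=
  stmt_4_general u M K C hC hmeas hbd hces
end

section
/- Let ν be a Lévy measure on ℝ satisfying ∫_{|z|≤1} |z|² dν(z) < ∞ and ∫_{|z|>1} |z|^q dν(z) < ∞ for some q > 0. Define the measure μ on ℝ by μ(B) = ∫_ℝ ∫₀^∞ 1_B(e^{−s} y) ds dν(y) for Borel sets B. Then ∫_ℝ min(1, z²) dμ(z) < ∞, i.e. μ is a Lévy measure. -/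
/-!
The measure `μ` is the image of `ν ⊗ Leb|(0,∞)` under `(y, s) ↦ e^{-s} y`, so the integral of
`min 1 z²` against `μ` is `∫ ∫₀^∞ min(1, e^{-2s} y²) ds dν(y)`. The inner integral is at most
`y² / 2` for every `y`, and at most `log |y| + 1/2 ≤ (1/q + 1/2) |y|^q` when `|y| > 1`; the two
hypotheses make these bounds `ν`-integrable on `|y| ≤ 1` and `|y| > 1` respectively.
-/

open MeasureTheory Set
open scoped ENNReal

theorem lintegral_eq_lintegral_lintegral_of_apply_eq {α β γ : Type*} [MeasurableSpace α]
    [MeasurableSpace β] [MeasurableSpace γ] {ν : Measure α} {σ : Measure β} [SFinite σ]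
    {μ : Measure γ} {T : α → β → γ} (hT : Measurable (Function.uncurry T))
    (hμ : ∀ B : Set γ, MeasurableSet B →
      μ B = ∫⁻ y, ∫⁻ s, B.indicator (fun _ => (1 : ℝ≥0∞)) (T y s) ∂σ ∂ν)
    {f : γ → ℝ≥0∞} (hf : Measurable f) :
    ∫⁻ z, f z ∂μ = ∫⁻ y, ∫⁻ s, f (T y s) ∂σ ∂ν := by
  have hμ_map : μ = (ν.prod σ).map (Function.uncurry T) := by
    ext B hB
    rw [hμ B hB, Measure.map_apply hT hB, Measure.prod_apply (hT hB)]
    refine lintegral_congr fun y => ?_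
    rw [← lintegral_indicator_one (measurable_prodMk_left (hT hB))]
    rfl
  rw [hμ_map, lintegral_map hf hT]
  exact lintegral_prod _ (hf.comp hT).aemeasurable

theorem setLIntegral_Ioi_ofReal_exp_neg_two_mul (a : ℝ) :
    ∫⁻ s in Ioi a, ENNReal.ofReal (Real.exp (-2 * s)) = ENNReal.ofReal (Real.exp (-2 * a) / 2) := by
  rw [← ofReal_integral_eq_lintegral_ofReal (integrableOn_exp_mul_Ioi (by norm_num) a)
    (Filter.Eventually.of_forall fun _ => (Real.exp_pos _).le), integral_exp_mul_Ioi (by norm_num)]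
  ring_nf

theorem setLIntegral_Ioi_min_one_sq_exp_neg_mul_le (y a : ℝ) :
    ∫⁻ s in Ioi a, ENNReal.ofReal (min 1 ((Real.exp (-s) * y) ^ 2))
      ≤ ENNReal.ofReal (y ^ 2 * (Real.exp (-2 * a) / 2)) :=
  calc ∫⁻ s in Ioi a, ENNReal.ofReal (min 1 ((Real.exp (-s) * y) ^ 2))
      ≤ ∫⁻ s in Ioi a, ENNReal.ofReal (y ^ 2) * ENNReal.ofReal (Real.exp (-2 * s)) := by
        refine lintegral_mono fun s => ?_
        rw [← ENNReal.ofReal_mul (sq_nonneg y), mul_pow, ← Real.exp_nat_mul]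
        exact ENNReal.ofReal_le_ofReal ((min_le_right _ _).trans_eq (by ring_nf))
    _ = ENNReal.ofReal (y ^ 2 * (Real.exp (-2 * a) / 2)) := by
        rw [lintegral_const_mul' _ _ ENNReal.ofReal_ne_top,
          setLIntegral_Ioi_ofReal_exp_neg_two_mul, ENNReal.ofReal_mul (sq_nonneg y)]

theorem setLIntegral_Ioi_zero_min_one_sq_exp_neg_mul_le (y : ℝ) :
    ∫⁻ s in Ioi 0, ENNReal.ofReal (min 1 ((Real.exp (-s) * y) ^ 2)) ≤ ENNReal.ofReal (y ^ 2) :=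
  (setLIntegral_Ioi_min_one_sq_exp_neg_mul_le y 0).trans <|
    ENNReal.ofReal_le_ofReal (by rw [mul_zero, Real.exp_zero]; nlinarith [sq_nonneg y])

/-- Up to time `log |y|` the integrand is at most `1`; afterwards the tail bound applies. -/
theorem setLIntegral_Ioi_zero_min_one_sq_exp_neg_mul_le_log {y : ℝ} (hy : 1 < |y|) :
    ∫⁻ s in Ioi 0, ENNReal.ofReal (min 1 ((Real.exp (-s) * y) ^ 2))
      ≤ ENNReal.ofReal (Real.log |y| + 1 / 2) := by
  set t := Real.log |y|
  have ht : 0 < t := Real.log_pos hy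
  have hy0 : 0 < |y| := one_pos.trans hy
  have htail : y ^ 2 * (Real.exp (-2 * t) / 2) = 1 / 2 := by
    rw [← sq_abs y, mul_comm (-2 : ℝ), Real.exp_mul, Real.exp_log hy0,
      Real.rpow_neg hy0.le, Real.rpow_two]
    field_simp [abs_pos.mp hy0]
  rw [← Ioc_union_Ioi_eq_Ioi ht.le, lintegral_union measurableSet_Ioi (Ioc_disjoint_Ioi le_rfl),
    ENNReal.ofReal_add ht.le (by norm_num)]
  gcongr
  · calc ∫⁻ s in Ioc 0 t, ENNReal.ofReal (min 1 ((Real.exp (-s) * y) ^ 2))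
        ≤ ∫⁻ _ in Ioc 0 t, 1 :=
          lintegral_mono fun _ => ENNReal.ofReal_le_one.mpr (min_le_left _ _)
      _ = ENNReal.ofReal t := by rw [setLIntegral_one, Real.volume_Ioc, sub_zero]
  · exact (setLIntegral_Ioi_min_one_sq_exp_neg_mul_le y t).trans_eq (by rw [htail])

theorem setLIntegral_Ioi_zero_min_one_sq_exp_neg_mul_le_rpow {y q : ℝ} (hy : 1 < |y|)
    (hq : 0 < q) :
    ∫⁻ s in Ioi 0, ENNReal.ofReal (min 1 ((Real.exp (-s) * y) ^ 2))
      ≤ ENNReal.ofReal ((q⁻¹ + 2⁻¹) * |y| ^ q) := by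
  refine (setLIntegral_Ioi_zero_min_one_sq_exp_neg_mul_le_log hy).trans
    (ENNReal.ofReal_le_ofReal ?_)
  have hlog := Real.log_le_rpow_div (abs_nonneg y) hq
  have hone : 1 ≤ |y| ^ q := Real.one_le_rpow hy.le hq.le
  rw [add_mul, inv_mul_eq_div]
  linarith

theorem stmt_7 (ν : Measure ℝ) (q : ℝ) (hq : 0 < q)
    (hsmall : ∫⁻ z in {z : ℝ | |z| ≤ 1}, ENNReal.ofReal (z ^ 2) ∂ν < ⊤)
    (hbig : ∫⁻ z in {z : ℝ | 1 < |z|}, ENNReal.ofReal (|z| ^ q) ∂ν < ⊤)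
    (μ : Measure ℝ)
    (hμ : ∀ B : Set ℝ, MeasurableSet B →
      μ B = ∫⁻ y, ∫⁻ s in Ioi (0:ℝ), B.indicator (fun _ => (1:ℝ≥0∞))
        (Real.exp (-s) * y) ∂volume ∂ν) :
    ∫⁻ z, ENNReal.ofReal (min 1 (z ^ 2)) ∂μ < ⊤ := by
  have hT : Measurable (Function.uncurry fun y s : ℝ => Real.exp (-s) * y) := by fun_prop
  rw [lintegral_eq_lintegral_lintegral_of_apply_eq hT hμ (by fun_prop),
    ← lintegral_add_compl _ (measurableSet_le measurable_abs measurable_const)]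
  have hcompl : {z : ℝ | |z| ≤ 1}ᶜ = {z : ℝ | 1 < |z|} := by ext; simp
  rw [hcompl, ENNReal.add_lt_top]
  constructor
  · refine (setLIntegral_mono (by fun_prop) fun y _ => ?_).trans_lt hsmall
    exact setLIntegral_Ioi_zero_min_one_sq_exp_neg_mul_le y
  · calc _ ≤ ∫⁻ z in {z : ℝ | 1 < |z|}, ENNReal.ofReal ((q⁻¹ + 2⁻¹) * |z| ^ q) ∂ν :=
          setLIntegral_mono (by fun_prop) fun y hy =>
            setLIntegral_Ioi_zero_min_one_sq_exp_neg_mul_le_rpow hy hq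
      _ = ENNReal.ofReal (q⁻¹ + 2⁻¹) * ∫⁻ z in {z : ℝ | 1 < |z|}, ENNReal.ofReal (|z| ^ q) ∂ν := by
          simp_rw [ENNReal.ofReal_mul (by positivity : (0:ℝ) ≤ q⁻¹ + 2⁻¹)]
          exact lintegral_const_mul' _ _ ENNReal.ofReal_ne_top
      _ < ⊤ := ENNReal.mul_lt_top ENNReal.ofReal_lt_top hbig
end

section
/- Suppose ν is a Lévy measure on ℝ with ν((−∞,0]) = 0 and c := ∫₀¹ z dν(z) < ∞, and let L be the operator L[y, f] = −f'(y)(y + c) + ∫₀^∞ (f(y+z) − f(y)) dν(z) acting on bounded C² functions. Then there exists a bounded, nondecreasing, nonconstant f ∈ C²(ℝ) with f'(y) > 0 for y < −c and f constant on [−c, ∞), which satisfies −L[y, f] ≤ 0 for every y ∈ ℝ and attains its global maximum on [−c, ∞). Hence the strong maximum principle fails for −L: a nonconstant bounded classical subsolution attains a global maximum. -/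
/-! The witness is `y ↦ -exp (1 / (y + c))` for `y < -c`, extended by `0`: a smooth, bounded,
nondecreasing function, strictly increasing on `(-∞, -c)` and flat on `[-c, ∞)`. The jump part
`∫_{z > 0} (f (y + z) - f y) dν` is nonnegative because `f` is nondecreasing, while the drift
part `f' y * (y + c)` is nonpositive: it vanishes on `[-c, ∞)` and has the sign of `y + c < 0`
elsewhere. The jump integrand is integrable because `f` is Lipschitz near `y` (small jumps,
against `∫₀¹ z dν < ∞`) and bounded (large jumps, against `ν (1, ∞) < ∞`). -/

open MeasureTheory Set

section JumpIntegrand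

variable {ν : Measure ℝ} {f : ℝ → ℝ}

lemma integrableOn_Ioc_sub_of_lipschitzOnWith (hmom : IntegrableOn (fun z => z) (Ioc (0:ℝ) 1) ν)
    (hf : Continuous f) {K : NNReal} {y : ℝ} (hK : LipschitzOnWith K f (Icc y (y + 1))) :
    IntegrableOn (fun z => f (y + z) - f y) (Ioc 0 1) ν := by
  refine Integrable.mono' (hmom.const_mul K)
    ((hf.comp (continuous_const_add y)).sub continuous_const).aestronglyMeasurable ?_
  rw [ae_restrict_iff' measurableSet_Ioc]
  filter_upwards with z ⟨hz0, hz1⟩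
  have hy : y ∈ Icc y (y + 1) := ⟨le_rfl, by linarith⟩
  have hyz : y + z ∈ Icc y (y + 1) := ⟨by linarith, by linarith⟩
  calc ‖f (y + z) - f y‖ = dist (f (y + z)) (f y) := (Real.dist_eq _ _).symm
    _ ≤ K * dist (y + z) y := hK.dist_le_mul _ hyz _ hy
    _ = K * z := by rw [Real.dist_eq, add_sub_cancel_left, abs_of_pos hz0]

lemma integrableOn_Ioi_one_sub_of_bounded (hfin : ν (Ioi 1) < ⊤) (hf : Continuous f)
    {B : ℝ} (hB : ∀ y, |f y| ≤ B) (y : ℝ) :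
    IntegrableOn (fun z => f (y + z) - f y) (Ioi 1) ν := by
  refine Integrable.mono' (g := fun _ => B + B) ((integrableOn_const_iff).2 (Or.inr hfin))
    ((hf.comp (continuous_const_add y)).sub continuous_const).aestronglyMeasurable ?_
  filter_upwards with _
  exact (abs_sub _ _).trans (add_le_add (hB _) (hB _))

theorem integrableOn_Ioi_sub_of_contDiff (hfin : ν (Ioi 1) < ⊤)
    (hmom : IntegrableOn (fun z => z) (Ioc (0:ℝ) 1) ν) (hf : ContDiff ℝ 1 f)
    {B : ℝ} (hB : ∀ y, |f y| ≤ B) (y : ℝ) :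
    IntegrableOn (fun z => f (y + z) - f y) (Ioi 0) ν := by
  obtain ⟨K, hK⟩ := hf.locallyLipschitz.locallyLipschitzOn.exists_lipschitzOnWith_of_compact
    (isCompact_Icc (a := y) (b := y + 1))
  have := (integrableOn_Ioc_sub_of_lipschitzOnWith hmom hf.continuous hK).union
    (integrableOn_Ioi_one_sub_of_bounded hfin hf.continuous hB y)
  rwa [Ioc_union_Ioi_eq_Ioi zero_le_one] at this

lemma setIntegral_sub_nonneg_of_monotone (hf : Monotone f) (y : ℝ) :
    0 ≤ ∫ z in Ioi 0, (f (y + z) - f y) ∂ν :=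
  setIntegral_nonneg measurableSet_Ioi fun _ hz =>
    sub_nonneg.2 (hf (le_add_of_nonneg_right (le_of_lt hz)))

end JumpIntegrand

namespace expNegInvGlue

lemma le_one (x : ℝ) : expNegInvGlue x ≤ 1 := by
  rcases le_or_gt x 0 with hx | hx
  · rw [zero_of_nonpos hx]; exact zero_le_one
  · rw [expNegInvGlue, if_neg (not_le.2 hx), Real.exp_le_one_iff, neg_nonpos]
    exact (inv_pos.2 hx).le

lemma hasDerivAt (x : ℝ) : HasDerivAt expNegInvGlue (x⁻¹ ^ 2 * expNegInvGlue x) x := by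
  simpa using hasDerivAt_polynomial_eval_inv_mul 1 x

end expNegInvGlue

noncomputable def reflectedGlue (c y : ℝ) : ℝ := -expNegInvGlue (-(y + c))

namespace reflectedGlue

variable (c : ℝ)

lemma contDiff {n : ℕ∞} : ContDiff ℝ n (reflectedGlue c) :=
  (expNegInvGlue.contDiff.comp (contDiff_id.add contDiff_const).neg).neg

lemma abs_le_one (y : ℝ) : |reflectedGlue c y| ≤ 1 := by
  rw [reflectedGlue, abs_neg, abs_of_nonneg (expNegInvGlue.nonneg _)]
  exact expNegInvGlue.le_one _

lemma monotone : Monotone (reflectedGlue c) :=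
  (expNegInvGlue.monotone.comp_antitone fun _ _ h => by linarith).neg

lemma nonpos (y : ℝ) : reflectedGlue c y ≤ 0 :=
  neg_nonpos.2 (expNegInvGlue.nonneg _)

lemma neg_of_lt {y : ℝ} (hy : y < -c) : reflectedGlue c y < 0 :=
  neg_neg_iff_pos.2 (expNegInvGlue.pos_of_pos (by linarith))

lemma eq_zero_of_ge {y : ℝ} (hy : -c ≤ y) : reflectedGlue c y = 0 := by
  rw [reflectedGlue, expNegInvGlue.zero_of_nonpos (by linarith), neg_zero]

lemma hasDerivAt (y : ℝ) :
    HasDerivAt (reflectedGlue c) ((-(y + c))⁻¹ ^ 2 * expNegInvGlue (-(y + c))) y := by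
  refine ((expNegInvGlue.hasDerivAt (-(y + c))).comp y
    ((hasDerivAt_id y).add_const c).neg).neg.congr_deriv ?_
  ring

lemma deriv_pos_of_lt {y : ℝ} (hy : y < -c) : 0 < deriv (reflectedGlue c) y := by
  have h : 0 < -(y + c) := by linarith
  rw [(hasDerivAt c y).deriv]
  exact mul_pos (pow_pos (inv_pos.2 h) 2) (expNegInvGlue.pos_of_pos h)

lemma deriv_eq_zero_of_ge {y : ℝ} (hy : -c ≤ y) : deriv (reflectedGlue c) y = 0 := by
  rw [(hasDerivAt c y).deriv, expNegInvGlue.zero_of_nonpos (by linarith), mul_zero]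

lemma deriv_mul_add_nonpos (y : ℝ) : deriv (reflectedGlue c) y * (y + c) ≤ 0 := by
  rcases le_or_gt (-c) y with hy | hy
  · rw [deriv_eq_zero_of_ge c hy, zero_mul]
  · exact mul_nonpos_of_nonneg_of_nonpos (monotone c).deriv_nonneg (by linarith)

end reflectedGlue

theorem stmt_14_general (ν : Measure ℝ)
    (hfin1 : ν (Ioi 1) < ⊤)
    (hc : IntegrableOn (fun z => z) (Ioc (0:ℝ) 1) ν)
    (c : ℝ) :
    ∃ f : ℝ → ℝ, ContDiff ℝ 2 f ∧ (∃ B, ∀ y, |f y| ≤ B) ∧ Monotone f ∧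
      (¬ ∃ k, ∀ y, f y = k) ∧
      (∀ y < -c, 0 < deriv f y) ∧
      (∀ y ≥ -c, f y = f (-c)) ∧
      (∀ y, f y ≤ f (-c)) ∧
      (∀ y, IntegrableOn (fun z => f (y + z) - f y) (Ioi 0) ν) ∧
      (∀ y, deriv f y * (y + c) - (∫ z in Ioi (0:ℝ), (f (y + z) - f y) ∂ν) ≤ 0) := by
  have hmax : reflectedGlue c (-c) = 0 := reflectedGlue.eq_zero_of_ge c le_rfl
  have hmono := reflectedGlue.monotone c
  have hbdd := reflectedGlue.abs_le_one c
  refine ⟨reflectedGlue c, reflectedGlue.contDiff c, ⟨1, hbdd⟩, hmono, ?nonconst,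
    fun _ => reflectedGlue.deriv_pos_of_lt c,
    fun y hy => by rw [reflectedGlue.eq_zero_of_ge c hy, hmax],
    fun y => hmax ▸ reflectedGlue.nonpos c y,
    integrableOn_Ioi_sub_of_contDiff hfin1 hc (reflectedGlue.contDiff c) hbdd, fun y => ?subsol⟩
  case nonconst =>
    rintro ⟨k, hk⟩
    have := reflectedGlue.neg_of_lt c (show -c - 1 < -c by linarith)
    rw [hk, ← hk (-c), hmax] at this
    exact lt_irrefl 0 this
  case subsol =>
    linarith [reflectedGlue.deriv_mul_add_nonpos c y,
      setIntegral_sub_nonneg_of_monotone (ν := ν) hmono y]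

theorem stmt_14 (ν : Measure ℝ) (hneg : ν (Iic 0) = 0)
    (hfin1 : ν (Ioi 1) < ⊤)
    (hc : IntegrableOn (fun z => z) (Ioc (0:ℝ) 1) ν)
    (c : ℝ) (hcdef : c = ∫ z in Ioc (0:ℝ) 1, z ∂ν) :
    ∃ f : ℝ → ℝ, ContDiff ℝ 2 f ∧ (∃ B, ∀ y, |f y| ≤ B) ∧ Monotone f ∧
      (¬ ∃ k, ∀ y, f y = k) ∧
      (∀ y < -c, 0 < deriv f y) ∧
      (∀ y ≥ -c, f y = f (-c)) ∧
      (∀ y, f y ≤ f (-c)) ∧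
      (∀ y, IntegrableOn (fun z => f (y + z) - f y) (Ioi 0) ν) ∧
      (∀ y, deriv f y * (y + c) - (∫ z in Ioi (0:ℝ), (f (y + z) - f y) ∂ν) ≤ 0) :=
  stmt_14_general ν hfin1 hc c
end

section
/- Let φ : ℝ → ℝ be continuous with φ(y) → +∞ as |y| → +∞ (coercive), and let V : ℝ → ℝ be upper semicontinuous and bounded above. For η > 0 set V_η(y) = V(y) − η φ(y). Then for every R > 0 there exists ȳ with |ȳ| ≥ R such that V_η(ȳ) ≥ V_η(y) for all |y| ≥ R. Moreover, if for every η > 0 every such maximizer ȳ satisfies |ȳ| = R, then sup_{y∈ℝ} V(y) = max_{|y| ≤ R} V(y), i.e. V attains its global supremum on the closed ball {|y| ≤ R}. -/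
/-!
Since `V` is bounded above and `φ` is coercive, `V - η φ` tends to `-∞` at infinity, so being upper
semicontinuous it attains its maximum on any nonempty closed set, in particular on `{R ≤ |y|}`.
If these maximizers all lie on the sphere `|y| = R`, then for `|y| ≥ R`
`V y ≤ max_{|z| ≤ R} V + η (φ y - min (φ R) (φ (-R)))`, and letting `η → 0` gives the claim.
-/

open Set Filter Topology

theorem UpperSemicontinuousOn.exists_isMaxOn' {X α : Type*} [TopologicalSpace X] [LinearOrder α]
    {f : X → α} {s : Set X} (hf : UpperSemicontinuousOn f s) (hsc : IsClosed s) {x₀ : X}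
    (h₀ : x₀ ∈ s) (hc : ∀ᶠ x in cocompact X ⊓ 𝓟 s, f x ≤ f x₀) : ∃ x ∈ s, IsMaxOn f s x := by
  obtain ⟨K, hK, hKf⟩ := (hasBasis_cocompact.inf_principal _).eventually_iff.1 hc
  have hsub : insert x₀ (K ∩ s) ⊆ s := insert_subset_iff.2 ⟨h₀, inter_subset_right⟩
  obtain ⟨x, hx, hxf⟩ := (hf.mono hsub).exists_isMaxOn (insert_nonempty _ _)
    ((hK.inter_right hsc).insert x₀)
  refine ⟨x, hsub hx, fun y hy => ?_⟩
  by_cases hyK : y ∈ K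
  exacts [hxf (Or.inr ⟨hyK, hy⟩), (hKf ⟨hyK, hy⟩).trans (hxf (Or.inl rfl))]

section Penalization

variable {X : Type*} [TopologicalSpace X] {φ V : X → ℝ} {η : ℝ}

theorem tendsto_sub_mul_cocompact_atBot (hφ : Tendsto φ (cocompact X) atTop)
    {B : ℝ} (hVB : ∀ y, V y ≤ B) (hη : 0 < η) :
    Tendsto (fun y => V y - η * φ y) (cocompact X) atBot := by
  refine tendsto_atBot_mono (fun y => sub_le_sub_right (hVB y) _) ?_
  exact tendsto_atBot_add_const_left _ B (tendsto_neg_atTop_atBot.comp (hφ.const_mul_atTop hη))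

theorem exists_isMaxOn_sub_mul (hφc : Continuous φ) (hφ : Tendsto φ (cocompact X) atTop)
    (hV : UpperSemicontinuous V) {B : ℝ} (hVB : ∀ y, V y ≤ B) (hη : 0 < η) {s : Set X}
    (hsc : IsClosed s) (hs : s.Nonempty) : ∃ x ∈ s, IsMaxOn (fun y => V y - η * φ y) s x := by
  obtain ⟨x₀, h₀⟩ := hs
  have husc : UpperSemicontinuous fun y => V y - η * φ y :=
    hV.add (continuous_const.mul hφc).neg.upperSemicontinuous
  refine (husc.upperSemicontinuousOn s).exists_isMaxOn' hsc h₀ ?_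
  exact ((tendsto_sub_mul_cocompact_atBot hφ hVB hη).eventually
    (eventually_le_atBot _)).filter_mono inf_le_left

end Penalization

theorem le_of_forall_pos_le_add_mul {a b c : ℝ} (h : ∀ η > (0 : ℝ), a ≤ b + η * c) : a ≤ b := by
  have hlim : Tendsto (fun η => b + η * c) (𝓝[>] 0) (𝓝 b) := by
    have hcont : Continuous fun η : ℝ => b + η * c := by fun_prop
    simpa using (hcont.tendsto 0).mono_left nhdsWithin_le_nhds
  exact ge_of_tendsto hlim (eventually_nhdsWithin_of_forall fun η hη => h η hη)

theorem stmt_17 (φ : ℝ → ℝ) (hφc : Continuous φ)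
    (hφcoer : Tendsto φ (cocompact ℝ) atTop)
    (V : ℝ → ℝ) (hV : UpperSemicontinuous V) (hVb : ∃ B, ∀ y, V y ≤ B) :
    (∀ η > (0:ℝ), ∀ R > (0:ℝ), ∃ ybar, R ≤ |ybar| ∧
      ∀ y, R ≤ |y| → V y - η * φ y ≤ V ybar - η * φ ybar) ∧
    (∀ R > (0:ℝ),
      (∀ η > (0:ℝ), ∀ ybar, (R ≤ |ybar| ∧
          ∀ y, R ≤ |y| → V y - η * φ y ≤ V ybar - η * φ ybar) → |ybar| = R) →
      ∃ y₀, |y₀| ≤ R ∧ ∀ y, V y ≤ V y₀) := by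
  obtain ⟨B, hVB⟩ := hVb
  have hmax : ∀ η > (0:ℝ), ∀ R : ℝ, ∃ ybar, R ≤ |ybar| ∧
      ∀ y, R ≤ |y| → V y - η * φ y ≤ V ybar - η * φ ybar := fun η hη R =>
    exists_isMaxOn_sub_mul hφc hφcoer hV hVB hη (isClosed_le continuous_const continuous_abs)
      ⟨|R|, (le_abs_self R).trans (le_abs_self _)⟩
  refine ⟨fun η hη R _ => hmax η hη R, fun R hR hsphere => ?_⟩
  obtain ⟨y₀, hy₀, hy₀max⟩ := (hV.upperSemicontinuousOn (Icc (-R) R)).exists_isMaxOn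
    ⟨0, by simpa using hR.le⟩ isCompact_Icc
  refine ⟨y₀, abs_le.2 hy₀, fun y => ?_⟩
  rcases le_or_gt |y| R with hy | hy
  · exact hy₀max (abs_le.1 hy)
  refine le_of_forall_pos_le_add_mul (c := φ y - min (φ R) (φ (-R))) fun η hη => ?_
  obtain ⟨ybar, hybar, hybar_max⟩ := hmax η hη R
  have hRbar := hsphere η hη ybar ⟨hybar, hybar_max⟩
  have hφbar : min (φ R) (φ (-R)) ≤ φ ybar := by
    rcases (abs_eq hR.le).1 hRbar with rfl | rfl
    exacts [min_le_left _ _, min_le_right _ _]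
  have hVbar : V ybar ≤ V y₀ := hy₀max (abs_le.1 hRbar.le)
  have := mul_le_mul_of_nonneg_left hφbar hη.le
  linarith [hybar_max y hy.le]
end
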